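/- arXiv:2509.11426 — 3 statements merged into one kernel-verified Lean document; each statement's English description precedes it below -/
import Mathlib

section
/- Fix n ≥ 3 and vectors u, v ∈ ℝⁿ with ‖v‖ = 1. Let N = (3‖u‖² − 1)·Iₙ + 6uuᵀ − 2vvᵀ. Then N has n − 2 eigenvalues equal to 3‖u‖² − 1, and the remaining two eigenvalues are 2(3‖u‖² − 1) ± √((3‖u‖² − 1)² + 12(‖u‖² − ⟨u,v⟩²)). -/
open scoped BigOperators

open Polynomial Matrix in
private lemma det_smul_one_sub_eig {n : ℕ} (N : Matrix (Fin n) (Fin n) ℝ)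
    (hHerm : N.IsHermitian) (x : ℝ) :
    Matrix.det (x • (1 : Matrix (Fin n) (Fin n) ℝ) - N)
      = ∏ i, (x - hHerm.eigenvalues i) := by
  classical
  set U : Matrix (Fin n) (Fin n) ℝ := (hHerm.eigenvectorUnitary : Matrix (Fin n) (Fin n) ℝ) with hU
  have hUU : U * star U = 1 := (Matrix.mem_unitaryGroup_iff).mp hHerm.eigenvectorUnitary.2
  have hspec := hHerm.spectral_theorem
  set D : Matrix (Fin n) (Fin n) ℝ := Matrix.diagonal (RCLike.ofReal ∘ hHerm.eigenvalues) with hD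
  have h1 : x • (1 : Matrix (Fin n) (Fin n) ℝ) - N = U * (x • 1 - D) * star U := by
    rw [Matrix.mul_sub, Matrix.sub_mul, Matrix.mul_smul, Matrix.mul_one, Matrix.smul_mul, hUU,
      hU, ← Unitary.conjStarAlgAut_apply (S := ℝ), ← hspec]
  rw [h1, Matrix.det_mul, Matrix.det_mul, mul_comm (Matrix.det U), mul_assoc,
      ← Matrix.det_mul, hUU, Matrix.det_one, mul_one]
  rw [Matrix.smul_one_eq_diagonal, hD, Matrix.diagonal_sub, Matrix.det_diagonal]
  simp

open Polynomial Matrix in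
private lemma det_smul_one_sub_formula {n : ℕ} (hn : 3 ≤ n) (u v : Fin n → ℝ)
    (hv : ∑ i, v i ^ 2 = 1)
    (N : Matrix (Fin n) (Fin n) ℝ)
    (hN : N = (3 * ∑ i, u i ^ 2 - 1) • (1 : Matrix (Fin n) (Fin n) ℝ)
        + (6 : ℝ) • Matrix.vecMulVec u u - (2 : ℝ) • Matrix.vecMulVec v v)
    (x : ℝ) (hx : x ≠ 3 * ∑ i, u i ^ 2 - 1) :
    Matrix.det (x • (1 : Matrix (Fin n) (Fin n) ℝ) - N)
      = (x - (3 * ∑ i, u i ^ 2 - 1)) ^ (n - 2) *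
        ((x - (3 * ∑ i, u i ^ 2 - 1)) ^ 2
          - 2 * (3 * ∑ i, u i ^ 2 - 1) * (x - (3 * ∑ i, u i ^ 2 - 1))
          - 12 * (∑ i, u i ^ 2 - (∑ i, u i * v i) ^ 2)) := by
  classical
  set a : ℝ := 3 * ∑ i, u i ^ 2 - 1 with ha
  set c : ℝ := x - a with hc
  have hc0 : c ≠ 0 := sub_ne_zero.mpr hx
  set A : Matrix (Fin n) (Fin 2) ℝ :=
    Matrix.of (fun i k => if k = 0 then c⁻¹ * u i else c⁻¹ * v i) with hA
  set B : Matrix (Fin 2) (Fin n) ℝ :=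
    Matrix.of (fun k j => if k = 0 then (-6) * u j else 2 * v j) with hB
  have hM : x • (1 : Matrix (Fin n) (Fin n) ℝ) - N = c • (1 + A * B) := by
    rw [hN]
    ext i j
    simp only [Matrix.sub_apply, Matrix.add_apply, Matrix.smul_apply, Matrix.one_apply,
      Matrix.vecMulVec_apply, Matrix.mul_apply, Fin.sum_univ_two, hA, hB, Matrix.of_apply,
      if_pos rfl, smul_eq_mul]
    have h1 : (1 : Fin 2) ≠ 0 := by decide
    rw [if_neg h1]
    split_ifs <;> field_simp <;> ring
  have e00 : (B * A) 0 0 = (-6) * c⁻¹ * ∑ i, u i ^ 2 := by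
    simp only [Matrix.mul_apply, hA, hB, Matrix.of_apply]
    rw [Finset.mul_sum]
    refine Finset.sum_congr rfl fun j _ => ?_
    norm_num; try ring
  have e01 : (B * A) 0 1 = (-6) * c⁻¹ * ∑ i, u i * v i := by
    simp only [Matrix.mul_apply, hA, hB, Matrix.of_apply]
    rw [Finset.mul_sum]
    refine Finset.sum_congr rfl fun j _ => ?_
    norm_num; try ring
  have e10 : (B * A) 1 0 = 2 * c⁻¹ * ∑ i, u i * v i := by
    simp only [Matrix.mul_apply, hA, hB, Matrix.of_apply]
    rw [Finset.mul_sum]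
    refine Finset.sum_congr rfl fun j _ => ?_
    norm_num; try ring
  have e11 : (B * A) 1 1 = 2 * c⁻¹ := by
    simp only [Matrix.mul_apply, hA, hB, Matrix.of_apply]
    calc ∑ j, (if (1:Fin 2) = 0 then (-6) * u j else 2 * v j)
            * (if (1:Fin 2) = 0 then c⁻¹ * u j else c⁻¹ * v j)
          = 2 * c⁻¹ * ∑ j, v j ^ 2 := by
            rw [Finset.mul_sum]
            refine Finset.sum_congr rfl fun j _ => ?_
            norm_num; try ring
      _ = 2 * c⁻¹ := by rw [hv, mul_one]
  have hdet2 : Matrix.det (1 + B * A)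
      = (1 + (-6) * c⁻¹ * ∑ i, u i ^ 2) * (1 + 2 * c⁻¹)
        - ((-6) * c⁻¹ * ∑ i, u i * v i) * (2 * c⁻¹ * ∑ i, u i * v i) := by
    rw [Matrix.det_fin_two]
    simp only [Matrix.add_apply, Matrix.one_apply_eq,
      Matrix.one_apply_ne (by decide : (0:Fin 2) ≠ 1),
      Matrix.one_apply_ne (by decide : (1:Fin 2) ≠ 0), e00, e01, e10, e11]
    ring
  rw [hM, Matrix.det_smul, Matrix.det_one_add_mul_comm, hdet2, Fintype.card_fin]
  have hcn : c ^ n = c ^ (n - 2) * c ^ 2 := by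
    rw [← pow_add]; congr 1; omega
  rw [hcn, mul_assoc]
  congr 1
  rw [ha]
  field_simp
  ring

/-- Eigenvalue structure of `N = (3‖u‖² − 1)·Iₙ + 6uuᵀ − 2vvᵀ` with `‖v‖ = 1`, `n ≥ 3`:
`n − 2` eigenvalues equal `3‖u‖² − 1`, and the remaining two are
`2(3‖u‖² − 1) ± √((3‖u‖² − 1)² + 12(‖u‖² − ⟨u,v⟩²))` (counted with multiplicity). -/
theorem stmt_3 (n : ℕ) (hn : 3 ≤ n) (u v : Fin n → ℝ)
    (hv : ∑ i, v i ^ 2 = 1)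
    (N : Matrix (Fin n) (Fin n) ℝ)
    (hN : N = (3 * ∑ i, u i ^ 2 - 1) • (1 : Matrix (Fin n) (Fin n) ℝ)
        + (6 : ℝ) • Matrix.vecMulVec u u - (2 : ℝ) • Matrix.vecMulVec v v)
    (hHerm : N.IsHermitian) :
    Finset.univ.val.map hHerm.eigenvalues
      = Multiset.replicate (n - 2) (3 * ∑ i, u i ^ 2 - 1)
        + { 2 * (3 * ∑ i, u i ^ 2 - 1)
              + Real.sqrt ((3 * ∑ i, u i ^ 2 - 1) ^ 2
                  + 12 * (∑ i, u i ^ 2 - (∑ i, u i * v i) ^ 2)),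
            2 * (3 * ∑ i, u i ^ 2 - 1)
              - Real.sqrt ((3 * ∑ i, u i ^ 2 - 1) ^ 2
                  + 12 * (∑ i, u i ^ 2 - (∑ i, u i * v i) ^ 2)) } := by
  classical
  open Polynomial in
  set a : ℝ := 3 * ∑ i, u i ^ 2 - 1 with ha
  set s : ℝ := ∑ i, u i ^ 2 - (∑ i, u i * v i) ^ 2 with hs
  have hs0 : 0 ≤ s := by
    have := Finset.sum_mul_sq_le_sq_mul_sq Finset.univ u v
    rw [hv, mul_one] at this
    rw [hs]; linarith [this]
  have hdisc : 0 ≤ a ^ 2 + 12 * s := by positivity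
  set r : ℝ := Real.sqrt (a ^ 2 + 12 * s) with hr
  have hr2 : r ^ 2 = a ^ 2 + 12 * s := Real.sq_sqrt hdisc
  set μp : ℝ := 2 * a + r with hμp
  set μm : ℝ := 2 * a - r with hμm
  set t : Multiset ℝ := Multiset.replicate (n - 2) a + {μp, μm} with ht
  set e : Multiset ℝ := Finset.univ.val.map hHerm.eigenvalues with he
  have key : ∀ x : ℝ, x ≠ a →
      ∏ i, (x - hHerm.eigenvalues i)
        = (x - a) ^ (n - 2) * ((x - μp) * (x - μm)) := by
    intro x hx
    rw [← det_smul_one_sub_eig N hHerm x,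
      det_smul_one_sub_formula hn u v hv N hN x hx]
    congr 1
    have : (x - μp) * (x - μm) = (x - 2*a)^2 - r^2 := by rw [hμp, hμm]; ring
    rw [this, hr2]; ring
  have hpoly : (e.map fun z => X - C z).prod = (t.map fun z => X - C z).prod := by
    apply Polynomial.eq_of_infinite_eval_eq
    apply Set.Infinite.mono (s := {a}ᶜ)
    · intro x hx
      have hx' : x ≠ a := hx
      show Polynomial.eval x _ = Polynomial.eval x _
      simp only [Polynomial.eval_multiset_prod, Multiset.map_map, Function.comp_def,
        Polynomial.eval_sub, Polynomial.eval_X, Polynomial.eval_C]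
      have hL : (Multiset.map (fun i => x - hHerm.eigenvalues i) Finset.univ.val).prod
          = ∏ i, (x - hHerm.eigenvalues i) := (Finset.prod_eq_multiset_prod _ _).symm
      rw [he, Multiset.map_map]
      simp only [Function.comp_def]
      rw [hL, key x hx', ht]
      rw [Multiset.map_add, Multiset.prod_add, Multiset.map_replicate,
        Multiset.prod_replicate]
      congr 1
      simp [Multiset.insert_eq_cons]
    · exact Set.Finite.infinite_compl (Set.finite_singleton a)
  have h1 := Polynomial.roots_multiset_prod_X_sub_C e
  have h2 := Polynomial.roots_multiset_prod_X_sub_C t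
  show e = t
  rw [← h1, hpoly, h2]
end

section
/- Let {τ_r}_{r ≥ 0} ⊂ ℝ, δ ∈ (0,1), η > 0 and t_n ∈ ℕ be such that |1 − η τ_r| ≤ 2 for all r and |1 − η τ_r| ≤ 1 − δ for all r ≥ t_n. Then for every t ≥ 0, the quantity M(t) := 1 + max_{τ ∈ [0:t]} Σ_{s ∈ [0:τ]} Π_{r ∈ [s:τ]} |1 − η τ_r| satisfies M(t) ≤ 1 + 2^{t_n} (t_n + 1) · (sup over j ≥ 0 of (1−δ)^j) + 2^{t_n}/δ, i.e., M(t) ≤ 1 + 2^{t_n}(t_n + 1 + 1/δ). -/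
/-- Long-time control of the accumulation factor: if `|1 − ητ_r| ≤ 2` for all `r` and
`|1 − ητ_r| ≤ 1 − δ` for all `r ≥ t_n`, then
`M(t) = 1 + max_{τ∈[0:t]} Σ_{s∈[0:τ]} Π_{r∈[s:τ]} |1 − ητ_r| ≤ 1 + 2^{t_n}(t_n + 1 + 1/δ)`
uniformly in `t ≥ 0`. -/
theorem stmt_11 (τ : ℕ → ℝ) (δ η : ℝ) (hδ0 : 0 < δ) (hδ1 : δ < 1) (hη : 0 < η)
    (tn : ℕ)
    (hbd : ∀ r : ℕ, |1 - η * τ r| ≤ 2)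
    (hcontr : ∀ r : ℕ, tn ≤ r → |1 - η * τ r| ≤ 1 - δ) :
    ∀ t : ℕ,
      1 + (Finset.range (t + 1)).sup' ⟨0, Finset.mem_range.mpr (Nat.succ_pos t)⟩
          (fun τ' => ∑ s ∈ Finset.range (τ' + 1), ∏ r ∈ Finset.Icc s τ', |1 - η * τ r|)
        ≤ 1 + (2 : ℝ) ^ tn * ((tn : ℝ) + 1 + 1 / δ) := by
  intro t
  set a : ℕ → ℝ := fun r => |1 - η * τ r| with ha
  have ha0 : ∀ r, 0 ≤ a r := fun r => abs_nonneg _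
  have h1δ0 : (0 : ℝ) ≤ 1 - δ := by linarith
  have h1δ1 : (1 : ℝ) - δ ≤ 1 := by linarith
  -- key bound on each product
  have hprod : ∀ s T : ℕ, ∏ r ∈ Finset.Icc s T, a r ≤
      (2 : ℝ) ^ tn * (1 - δ) ^ (((Finset.Icc s T).filter (fun r => tn ≤ r)).card) := by
    intro s T
    rw [← Finset.prod_filter_mul_prod_filter_not (Finset.Icc s T) (fun r => tn ≤ r)]
    rw [mul_comm]
    apply mul_le_mul
    · calc ∏ r ∈ (Finset.Icc s T).filter (fun r => ¬ tn ≤ r), a r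
          ≤ ∏ r ∈ (Finset.Icc s T).filter (fun r => ¬ tn ≤ r), (2 : ℝ) := by
            apply Finset.prod_le_prod (fun r _ => ha0 r) (fun r _ => hbd r)
        _ = (2 : ℝ) ^ (((Finset.Icc s T).filter (fun r => ¬ tn ≤ r)).card) := by
            rw [Finset.prod_const]
        _ ≤ (2 : ℝ) ^ tn := by
            apply pow_le_pow_right₀ (by norm_num)
            calc ((Finset.Icc s T).filter (fun r => ¬ tn ≤ r)).card
                ≤ (Finset.range tn).card := by
                  apply Finset.card_le_card
                  intro x hx
                  simp only [Finset.mem_filter, not_le] at hx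
                  exact Finset.mem_range.mpr hx.2
              _ = tn := Finset.card_range tn
    · calc ∏ r ∈ (Finset.Icc s T).filter (fun r => tn ≤ r), a r
          ≤ ∏ r ∈ (Finset.Icc s T).filter (fun r => tn ≤ r), (1 - δ) := by
            apply Finset.prod_le_prod (fun r _ => ha0 r)
            intro r hr
            exact hcontr r (Finset.mem_filter.mp hr).2
        _ = (1 - δ) ^ _ := Finset.prod_const _
    · exact Finset.prod_nonneg (fun r _ => ha0 r)
    · positivity
  -- the filtered card for s ≥ tn
  have hcard : ∀ s T : ℕ, tn ≤ s → s ≤ T →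
      ((Finset.Icc s T).filter (fun r => tn ≤ r)).card = T + 1 - s := by
    intro s T hs hsT
    rw [Finset.filter_true_of_mem (fun x hx => le_trans hs (Finset.mem_Icc.mp hx).1)]
    rw [Nat.card_Icc]
  -- geometric sum bound
  have hgeom : ∀ n : ℕ, ∑ j ∈ Finset.range n, (1 - δ) ^ j ≤ 1 / δ := by
    intro n
    have hne : (1 : ℝ) - δ ≠ 1 := by linarith
    rw [geom_sum_eq hne]
    have h1 : (1 : ℝ) - δ - 1 = -δ := by ring
    rw [h1, div_neg, ← neg_div, neg_sub]
    apply div_le_div_of_nonneg_right ?_ hδ0.le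
    · nlinarith [pow_nonneg h1δ0 n]
  -- main sum bound
  have hsum : ∀ T : ℕ, ∑ s ∈ Finset.range (T + 1), ∏ r ∈ Finset.Icc s T, a r ≤
      (2 : ℝ) ^ tn * ((tn : ℝ) + 1 + 1 / δ) := by
    intro T
    have step1 : ∑ s ∈ Finset.range (T + 1), ∏ r ∈ Finset.Icc s T, a r ≤
        ∑ s ∈ Finset.range (T + 1),
          (2 : ℝ) ^ tn * ((if s < tn then (1:ℝ) else 0) + (1 - δ) ^ (T + 1 - s)) := by
      apply Finset.sum_le_sum
      intro s hs
      have hsT : s ≤ T := Nat.lt_succ_iff.mp (Finset.mem_range.mp hs)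
      by_cases hstn : s < tn
      · calc ∏ r ∈ Finset.Icc s T, a r ≤ (2:ℝ)^tn * (1-δ)^_ := hprod s T
          _ ≤ (2:ℝ)^tn * 1 := by
              apply mul_le_mul_of_nonneg_left (pow_le_one₀ h1δ0 h1δ1) (by positivity)
          _ ≤ _ := by
              rw [if_pos hstn]
              have : (0:ℝ) ≤ (1 - δ) ^ (T + 1 - s) := by positivity
              nlinarith [pow_pos (show (0:ℝ) < 2 by norm_num) tn]
      · push_neg at hstn
        rw [if_neg (by omega)]
        calc ∏ r ∈ Finset.Icc s T, a r ≤ (2:ℝ)^tn * (1-δ)^_ := hprod s T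
          _ = (2:ℝ)^tn * (0 + (1-δ)^(T+1-s)) := by rw [hcard s T hstn hsT, zero_add]
    refine le_trans step1 ?_
    rw [← Finset.mul_sum]
    apply mul_le_mul_of_nonneg_left _ (by positivity)
    rw [Finset.sum_add_distrib]
    have hA : ∑ s ∈ Finset.range (T + 1), (if s < tn then (1:ℝ) else 0) ≤ (tn : ℝ) := by
      rw [Finset.sum_boole]
      have : ((Finset.range (T+1)).filter (fun s => s < tn)).card ≤ tn := by
        calc _ ≤ (Finset.range tn).card := by
              apply Finset.card_le_card
              intro x hx
              exact Finset.mem_range.mpr (Finset.mem_filter.mp hx).2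
          _ = tn := Finset.card_range tn
      exact_mod_cast this
    have hB : ∑ s ∈ Finset.range (T + 1), (1 - δ) ^ (T + 1 - s) ≤ 1 + 1 / δ := by
      have hre : ∑ s ∈ Finset.range (T + 1), (1 - δ) ^ (T + 1 - s)
          = ∑ j ∈ Finset.range (T + 1), (1 - δ) ^ (j + 1) := by
        rw [← Finset.sum_range_reflect]
        apply Finset.sum_congr rfl
        intro j hj
        have hj' : j < T + 1 := Finset.mem_range.mp hj
        congr 1
        omega
      rw [hre]
      calc ∑ j ∈ Finset.range (T + 1), (1 - δ) ^ (j + 1)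
          ≤ ∑ j ∈ Finset.range (T + 1), (1 - δ) ^ j := by
            apply Finset.sum_le_sum
            intro j _
            exact pow_le_pow_of_le_one h1δ0 h1δ1 (Nat.le_succ j)
        _ ≤ 1 / δ := hgeom _
        _ ≤ 1 + 1 / δ := by linarith
    linarith
  have hsup : (Finset.range (t + 1)).sup' ⟨0, Finset.mem_range.mpr (Nat.succ_pos t)⟩
      (fun τ' => ∑ s ∈ Finset.range (τ' + 1), ∏ r ∈ Finset.Icc s τ', |1 - η * τ r|)
      ≤ (2 : ℝ) ^ tn * ((tn : ℝ) + 1 + 1 / δ) := by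
    apply Finset.sup'_le
    intro T _
    exact hsum T
  linarith
end

section
/- Let λ ∈ ℝ with 1 − 3η + ε ≤ 1 for constants η ∈ (0, 1/3) and ε ≥ 0 with 3η − ε > 0, and let (γ_t) be a sequence such that γ_t ∈ {1 + ε, 2, 1 − 3η + ε} with γ_t = 2 for at most A indices, γ_t = 1 + ε for at most B indices, and γ_t = 1 − 3η + ε for all remaining indices. If (x_t) satisfies x_{t+1} ≤ γ_t x_t + c for all t ≥ 0 with x₀ ≥ 0 and c ≥ 0, then for all t, x_{t+1} ≤ 2^A (1+ε)^B ( x₀ + c·(A + B + 1/(3η − ε)) ). -/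
set_option maxHeartbeats 1000000

open scoped Classical

/-- Three-phase growth control: if each step factor `γ_t` is one of `1 + ε`, `2`, or
`1 − 3η + ε`, with at most `A` steps equal to `2` and at most `B` steps equal to `1 + ε`,
then any sequence with `x_{t+1} ≤ γ_t x_t + c`, `x₀ ≥ 0`, `c ≥ 0` satisfies
`x_{t+1} ≤ 2^A (1+ε)^B (x₀ + c(A + B + 1/(3η − ε)))` for all `t`. -/
theorem stmt_18 (η ε : ℝ) (hη0 : 0 < η) (hη : η < 1 / 3) (hε : 0 ≤ ε)
    (hεη : 3 * η - ε > 0) (h1 : 1 - 3 * η + ε ≤ 1)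
    (A B : ℕ) (γ : ℕ → ℝ)
    (hγ : ∀ t : ℕ, γ t = 1 + ε ∨ γ t = 2 ∨ γ t = 1 - 3 * η + ε)
    (h2fin : {t : ℕ | γ t = 2}.Finite) (h2card : {t : ℕ | γ t = 2}.ncard ≤ A)
    (hεfin : {t : ℕ | γ t = 1 + ε}.Finite) (hεcard : {t : ℕ | γ t = 1 + ε}.ncard ≤ B)
    (x : ℕ → ℝ) (hx0 : 0 ≤ x 0) (c : ℝ) (hc : 0 ≤ c)
    (hrec : ∀ t : ℕ, x (t + 1) ≤ γ t * x t + c) :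
    ∀ t : ℕ, x (t + 1)
      ≤ 2 ^ A * (1 + ε) ^ B * (x 0 + c * ((A : ℝ) + (B : ℝ) + 1 / (3 * η - ε))) := by
  set K := 1 / (3 * η - ε) with hKdef
  have hKpos : 0 < K := by positivity
  have hKmul : (3 * η - ε) * K = 1 := by rw [hKdef]; field_simp
  have hε1 : ε < 1 := by linarith
  have hne1 : (1 : ℝ) + ε ≠ 2 := by intro h; linarith [h]
  have hne1' : (2 : ℝ) ≠ 1 + ε := fun h => hne1 h.symm
  have hne2 : (1 : ℝ) - 3 * η + ε ≠ 2 := by intro h; linarith [h]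
  have hne3 : (1 : ℝ) - 3 * η + ε ≠ 1 + ε := by intro h; linarith [h]
  set a : ℕ → ℕ := fun t => ((Finset.range t).filter (fun s => γ s = 2)).card with hadef
  set b : ℕ → ℕ := fun t => ((Finset.range t).filter (fun s => γ s = 1 + ε)).card with hbdef
  have haA : ∀ t, a t ≤ A := by
    intro t
    refine le_trans ?_ h2card
    simp only [hadef]
    rw [← Set.ncard_coe_finset]
    refine Set.ncard_le_ncard ?_ h2fin
    intro s hs
    simp only [Finset.coe_filter, Set.mem_setOf_eq, Finset.mem_range] at hs ⊢
    exact hs.2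
  have hbB : ∀ t, b t ≤ B := by
    intro t
    refine le_trans ?_ hεcard
    simp only [hbdef]
    rw [← Set.ncard_coe_finset]
    refine Set.ncard_le_ncard ?_ hεfin
    intro s hs
    simp only [Finset.coe_filter, Set.mem_setOf_eq, Finset.mem_range] at hs ⊢
    exact hs.2
  have hM : ∀ t, (1 : ℝ) ≤ 2 ^ (a t) * (1 + ε) ^ (b t) := by
    intro t
    have h1 : (1 : ℝ) ≤ 2 ^ (a t) := one_le_pow₀ (by norm_num)
    have h2 : (1 : ℝ) ≤ (1 + ε) ^ (b t) := one_le_pow₀ (by linarith)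
    nlinarith
  have hmain : ∀ t, x t ≤ 2 ^ (a t) * (1 + ε) ^ (b t) * (x 0 + c * ((a t : ℝ) + (b t : ℝ) + K)) := by
    intro t
    induction t with
    | zero =>
      simp only [hadef, hbdef, Finset.range_zero, Finset.filter_empty, Finset.card_empty,
        pow_zero, Nat.cast_zero]
      nlinarith
    | succ t ih =>
      have hMt := hM t
      have hXnn : 0 ≤ x 0 + c * ((a t : ℝ) + (b t : ℝ) + K) := by positivity
      rcases hγ t with h | h | h
      · -- γ t = 1 + ε
        have ha1 : a (t + 1) = a t := by
          simp [hadef, Finset.range_add_one, Finset.filter_insert, h, hne1]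
        have hb1 : b (t + 1) = b t + 1 := by
          simp [hbdef, Finset.range_add_one, Finset.filter_insert, h,
            Finset.card_insert_of_notMem Finset.notMem_range_self]
        rw [ha1, hb1]
        have step := hrec t
        rw [h] at step
        have hmul : (1 + ε) * x t ≤ (1 + ε) * (2 ^ (a t) * (1 + ε) ^ (b t) * (x 0 + c * ((a t : ℝ) + (b t : ℝ) + K))) :=
          mul_le_mul_of_nonneg_left ih (by linarith)
        have : x (t + 1) ≤ (1 + ε) * (2 ^ (a t) * (1 + ε) ^ (b t) * (x 0 + c * ((a t : ℝ) + (b t : ℝ) + K))) + c := by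
          linarith
        refine this.trans ?_
        rw [pow_succ]
        push_cast
        nlinarith [mul_le_mul_of_nonneg_left hMt hc]
      · -- γ t = 2
        have ha1 : a (t + 1) = a t + 1 := by
          simp [hadef, Finset.range_add_one, Finset.filter_insert, h,
            Finset.card_insert_of_notMem Finset.notMem_range_self]
        have hb1 : b (t + 1) = b t := by
          simp [hbdef, Finset.range_add_one, Finset.filter_insert, h, hne1']
        rw [ha1, hb1]
        have step := hrec t
        rw [h] at step
        have hmul : 2 * x t ≤ 2 * (2 ^ (a t) * (1 + ε) ^ (b t) * (x 0 + c * ((a t : ℝ) + (b t : ℝ) + K))) :=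
          mul_le_mul_of_nonneg_left ih (by norm_num)
        have : x (t + 1) ≤ 2 * (2 ^ (a t) * (1 + ε) ^ (b t) * (x 0 + c * ((a t : ℝ) + (b t : ℝ) + K))) + c := by
          linarith
        refine this.trans ?_
        rw [pow_succ]
        push_cast
        nlinarith [mul_le_mul_of_nonneg_left hMt hc]
      · -- γ t = 1 - 3η + ε
        have ha1 : a (t + 1) = a t := by
          simp [hadef, Finset.range_add_one, Finset.filter_insert, h, hne2]
        have hb1 : b (t + 1) = b t := by
          simp [hbdef, Finset.range_add_one, Finset.filter_insert, h, hne3]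
        rw [ha1, hb1]
        have step := hrec t
        rw [h] at step
        have hρpos : (0 : ℝ) < 1 - 3 * η + ε := by linarith
        have hmul : (1 - 3 * η + ε) * x t ≤ (1 - 3 * η + ε) * (2 ^ (a t) * (1 + ε) ^ (b t) * (x 0 + c * ((a t : ℝ) + (b t : ℝ) + K))) :=
          mul_le_mul_of_nonneg_left ih (le_of_lt hρpos)
        have hcK : c ≤ (3 * η - ε) * (2 ^ (a t) * (1 + ε) ^ (b t) * (x 0 + c * ((a t : ℝ) + (b t : ℝ) + K))) := by
          have h2 : c * K ≤ x 0 + c * ((a t : ℝ) + (b t : ℝ) + K) := by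
            have : 0 ≤ c * ((a t : ℝ) + (b t : ℝ)) := by positivity
            nlinarith
          have h3 : x 0 + c * ((a t : ℝ) + (b t : ℝ) + K) ≤ 2 ^ (a t) * (1 + ε) ^ (b t) * (x 0 + c * ((a t : ℝ) + (b t : ℝ) + K)) := by
            nlinarith
          nlinarith
        linarith
  intro t
  refine (hmain (t + 1)).trans ?_
  have h2A : (2 : ℝ) ^ (a (t+1)) ≤ 2 ^ A := by
    exact pow_le_pow_right₀ (by norm_num) (haA _)
  have hεB : (1 + ε) ^ (b (t+1)) ≤ (1 + ε) ^ B := by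
    exact pow_le_pow_right₀ (by linarith) (hbB _)
  have hinner : x 0 + c * ((a (t+1) : ℝ) + (b (t+1) : ℝ) + K) ≤ x 0 + c * ((A : ℝ) + (B : ℝ) + K) := by
    have h1 : ((a (t+1) : ℝ)) ≤ A := Nat.cast_le.mpr (haA _)
    have h2 : ((b (t+1) : ℝ)) ≤ B := Nat.cast_le.mpr (hbB _)
    nlinarith
  have hnn1 : (0:ℝ) ≤ 2 ^ (a (t+1)) := by positivity
  have hnn2 : (0:ℝ) ≤ (1 + ε) ^ (b (t+1)) := by positivity
  have hnn3 : 0 ≤ x 0 + c * ((a (t+1) : ℝ) + (b (t+1) : ℝ) + K) := by positivity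
  calc 2 ^ (a (t+1)) * (1 + ε) ^ (b (t+1)) * (x 0 + c * ((a (t+1) : ℝ) + (b (t+1) : ℝ) + K))
      ≤ 2 ^ A * (1 + ε) ^ B * (x 0 + c * ((A : ℝ) + (B : ℝ) + K)) := by
        gcongr <;> first | positivity | linarith [haA (t+1), hbB (t+1), Nat.cast_le.mpr (haA (t+1)), Nat.cast_le.mpr (hbB (t+1))]
    _ = _ := rfl
end
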